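/- arXiv:1810.02127 — 4 statements merged into one kernel-verified Lean document; each statement's English description precedes it below -/
import Mathlib

section
/- With w_{k+1} the last column of B_{k+1}⁻¹ and w_k the last column of B_k⁻¹ for nested nonsingular upper bidiagonal matrices, one has ‖w_{k+1}‖² = (β_k² ‖w_k‖² + 1)/α_{k+1}². -/
/-!
When the last row of `B` vanishes off the diagonal, `B x = e_last` is solved by block back
substitution: `x_last = 1 / a` with `a = B_{last,last}`, and the leading block `B_k` must send the
remaining entries to `-(1 / a)` times the part of the last column above the diagonal. For an upper
bidiagonal `B` that part is `β_k e_k`, so `w_{k+1} = (-(β_k / α_{k+1}) w_k, 1 / α_{k+1})`.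
-/

open Matrix

namespace Matrix

theorem IsUpperTriangular.submatrix_of_strictMono {α m l : Type*} [Zero α] [Preorder m]
    [Preorder l] {M : Matrix m m α} {f : l → m} (h : M.IsUpperTriangular) (hf : StrictMono f) :
    (M.submatrix f f).IsUpperTriangular :=
  fun _ _ hji => h (hf hji)

section CommRing

variable {R : Type*} [CommRing R]

theorem isUnit_det_of_isUpperTriangular {m : Type*} [Fintype m] [DecidableEq m] [LinearOrder m]
    {M : Matrix m m R} (h : M.IsUpperTriangular) (hdiag : ∀ i, IsUnit (M i i)) :
    IsUnit M.det := by
  rw [det_of_isUpperTriangular h]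
  exact IsUnit.prod_univ_iff.mpr hdiag

theorem inv_col_eq_of_mulVec_eq_single {m : Type*} [Fintype m] [DecidableEq m]
    {A : Matrix m m R} (hA : IsUnit A.det) {v : m → R} {i : m} (hv : A *ᵥ v = Pi.single i 1) :
    (fun r => A⁻¹ r i) = v := by
  have : A⁻¹ *ᵥ Pi.single i 1 = v := by
    rw [← hv, mulVec_mulVec, nonsing_inv_mul _ hA, one_mulVec]
  rwa [mulVec_single_one] at this

theorem det_eq_mul_det_submatrix_castSucc {n : ℕ} {B : Matrix (Fin (n + 1)) (Fin (n + 1)) R}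
    (hrow : ∀ j : Fin n, B (Fin.last n) j.castSucc = 0) :
    B.det = B (Fin.last n) (Fin.last n) * (B.submatrix Fin.castSucc Fin.castSucc).det := by
  rw [det_succ_row B (Fin.last n), Fin.sum_univ_castSucc]
  simp [hrow, Fin.succAbove_last, ← two_mul, pow_mul]

end CommRing

section LastRow

variable {K : Type*} [Field K] {n : ℕ} {B : Matrix (Fin (n + 1)) (Fin (n + 1)) K}

theorem mulVec_snoc_eq_single_last
    (hrow : ∀ j : Fin n, B (Fin.last n) j.castSucc = 0) (ha : B (Fin.last n) (Fin.last n) ≠ 0)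
    (hBk : IsUnit (B.submatrix Fin.castSucc Fin.castSucc).det) :
    B *ᵥ Fin.snoc (-(B (Fin.last n) (Fin.last n))⁻¹ •
        ((B.submatrix Fin.castSucc Fin.castSucc)⁻¹ *ᵥ fun j => B j.castSucc (Fin.last n)))
      (B (Fin.last n) (Fin.last n))⁻¹ = Pi.single (Fin.last n) 1 := by
  set a := B (Fin.last n) (Fin.last n)
  set Bk := B.submatrix Fin.castSucc Fin.castSucc
  set u : Fin n → K := fun j => B j.castSucc (Fin.last n)
  have hBku : Bk *ᵥ (Bk⁻¹ *ᵥ u) = u := by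
    rw [mulVec_mulVec, mul_nonsing_inv _ hBk, one_mulVec]
  funext i
  induction i using Fin.lastCases with
  | last => simp [mulVec, dotProduct, Fin.sum_univ_castSucc, hrow, a, ha]
  | cast j =>
    have hrow_j : ∀ (x : Fin n → K) (c : K),
        (B *ᵥ Fin.snoc x c) j.castSucc = (Bk *ᵥ x) j + u j * c := by
      intro x c
      simp [mulVec, dotProduct, Fin.sum_univ_castSucc, Bk, u]
    rw [hrow_j, mulVec_smul, hBku]
    simp [(Fin.castSucc_lt_last j).ne]
    ring

theorem inv_col_last_eq_snoc
    (hrow : ∀ j : Fin n, B (Fin.last n) j.castSucc = 0) (ha : B (Fin.last n) (Fin.last n) ≠ 0)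
    (hBk : IsUnit (B.submatrix Fin.castSucc Fin.castSucc).det) :
    (fun r => B⁻¹ r (Fin.last n)) = Fin.snoc (-(B (Fin.last n) (Fin.last n))⁻¹ •
        ((B.submatrix Fin.castSucc Fin.castSucc)⁻¹ *ᵥ fun j => B j.castSucc (Fin.last n)))
      (B (Fin.last n) (Fin.last n))⁻¹ := by
  refine inv_col_eq_of_mulVec_eq_single ?_ (mulVec_snoc_eq_single_last hrow ha hBk)
  rw [det_eq_mul_det_submatrix_castSucc hrow]
  exact (isUnit_iff_ne_zero.mpr ha).mul hBk

end LastRow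

end Matrix

/-- For nested nonsingular upper bidiagonal matrices, with `w_{k+1}` the last
column of `B_{k+1}⁻¹` and `w_k` the last column of `B_k⁻¹`,
`‖w_{k+1}‖² = (β_k² ‖w_k‖² + 1)/α_{k+1}²`. -/
theorem stmt_7 {k : ℕ} (α : Fin (k+2) → ℝ) (β : Fin (k+1) → ℝ)
    (hα : ∀ i, α i ≠ 0)
    (B : Matrix (Fin (k+2)) (Fin (k+2)) ℝ)
    (hdiag : ∀ i, B i i = α i)
    (hsuper : ∀ i : Fin (k+1), B i.castSucc i.succ = β i)
    (hzero : ∀ i j : Fin (k+2), (i : ℕ) ≠ (j : ℕ) → (j : ℕ) ≠ (i : ℕ) + 1 →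
      B i j = 0)
    (Bk : Matrix (Fin (k+1)) (Fin (k+1)) ℝ)
    (hBk : Bk = B.submatrix Fin.castSucc Fin.castSucc)
    (w1 : Fin (k+2) → ℝ) (hw1 : w1 = fun i => B⁻¹ i (Fin.last (k+1)))
    (w : Fin (k+1) → ℝ) (hw : w = fun i => Bk⁻¹ i (Fin.last k)) :
    ∑ i, (w1 i)^2 =
      ((β (Fin.last k))^2 * ∑ i, (w i)^2 + 1) / (α (Fin.last (k+1)))^2 := by
  subst hBk hw1
  set l := Fin.last k
  have hupper : B.IsUpperTriangular := fun i j (hji : j < i) => hzero i j (by omega) (by omega)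
  have hunit : IsUnit (B.submatrix Fin.castSucc Fin.castSucc).det :=
    isUnit_det_of_isUpperTriangular (hupper.submatrix_of_strictMono Fin.strictMono_castSucc)
      fun i => by simpa [hdiag] using (hα _).isUnit
  have hrow : ∀ j : Fin (k+1), B (Fin.last (k+1)) j.castSucc = 0 := fun j =>
    hzero _ _ (by simp; omega) (by simp; omega)
  have hcol : (fun j : Fin (k+1) => B j.castSucc (Fin.last (k+1))) = Pi.single l (β l) := by
    funext j
    rcases eq_or_ne j l with rfl | hj
    · simpa [l] using hsuper l
    · rw [Pi.single_eq_of_ne hj]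
      have : (j : ℕ) ≠ k := fun h => hj (Fin.ext h)
      exact hzero _ _ (by simp; omega) (by simp; omega)
  have hsolve :
      (B.submatrix Fin.castSucc Fin.castSucc)⁻¹ *ᵥ Pi.single l (β l) = β l • w := by
    funext i
    simp [mulVec_single, hw, mul_comm]
  rw [inv_col_last_eq_snoc hrow (by rw [hdiag]; exact hα _) hunit, hcol, hsolve,
    Fin.sum_univ_castSucc]
  simp only [Fin.snoc_castSucc, Fin.snoc_last, Pi.smul_apply, smul_eq_mul, hdiag, ← mul_assoc,
    mul_pow, ← Finset.mul_sum]
  field_simp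
end

section
/- Let (γ_k), (δ_k) be positive reals and μ > 0. Define γ₀^{(μ)} = 1/μ and γ_{k+1}^{(μ)} = (γ_k^{(μ)} − γ_k)/(μ(γ_k^{(μ)} − γ_k) + δ_{k+1}), and define φ₀ = 1 and φ_{k+1} = φ_k/(φ_k + δ_{k+1}). If γ_k^{(μ)} > γ_k > 0 for all k, then μ γ_k^{(μ)} ≤ φ_k for all k; i.e., the Gauss-Radau coefficient satisfies γ_k^{(μ)} ‖r_k‖² ≤ (‖r_k‖²/μ)(‖r_k‖²/‖p_k‖²) when φ_k = ‖r_k‖²/‖p_k‖². -/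
/-! Both recursions apply the increasing map `t ↦ t / (t + δ_{k+1})`: `μ γ_{k+1}^{(μ)}` is its value
at `μ (γ_k^{(μ)} − γ_k)` and `φ_{k+1}` its value at `φ_k`. Since `0 < μ (γ_k^{(μ)} − γ_k) ≤ μ γ_k^{(μ)}`,
the inequality `μ γ_k^{(μ)} ≤ φ_k` propagates by induction. -/

theorem div_add_le_div_add {K : Type*} [Field K] [LinearOrder K] [IsStrictOrderedRing K]
    {a b d : K} (ha : 0 ≤ a) (hab : a ≤ b) (hd : 0 < d) : a / (a + d) ≤ b / (b + d) := by
  rw [div_le_div_iff₀ (by linarith) (by linarith)]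
  nlinarith

/-- If `γ₀^{(μ)} = 1/μ`, `γ_{k+1}^{(μ)} = (γ_k^{(μ)} − γ_k)/(μ(γ_k^{(μ)} − γ_k) + δ_{k+1})`,
`φ₀ = 1`, `φ_{k+1} = φ_k/(φ_k + δ_{k+1})`, with `γ_k, δ_k > 0`, `μ > 0` and
`γ_k < γ_k^{(μ)}` for all `k`, then `μ γ_k^{(μ)} ≤ φ_k` for all `k`. -/
theorem stmt_12 (γ δ : ℕ → ℝ) (hγ : ∀ k, 0 < γ k) (hδ : ∀ k, 0 < δ k)
    (μ : ℝ) (hμ : 0 < μ)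
    (g : ℕ → ℝ) (hg0 : g 0 = 1/μ)
    (hg : ∀ k, g (k+1) = (g k - γ k) / (μ*(g k - γ k) + δ (k+1)))
    (φ : ℕ → ℝ) (hφ0 : φ 0 = 1)
    (hφ : ∀ k, φ (k+1) = φ k / (φ k + δ (k+1)))
    (hgγ : ∀ k, γ k < g k) :
    ∀ k, μ * g k ≤ φ k := by
  intro k
  induction k with
  | zero => simp [hg0, hφ0, hμ.ne']
  | succ k ih =>
    have hpos : 0 < μ * (g k - γ k) := mul_pos hμ (sub_pos.2 (hgγ k))
    have hle : μ * (g k - γ k) ≤ φ k :=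
      (mul_le_mul_of_nonneg_left (by linarith [hγ k]) hμ.le).trans ih
    calc μ * g (k + 1) = μ * (g k - γ k) / (μ * (g k - γ k) + δ (k + 1)) := by
          rw [hg, mul_div_assoc]
      _ ≤ φ k / (φ k + δ (k + 1)) := div_add_le_div_add hpos.le hle (hδ _)
      _ = φ (k + 1) := (hφ k).symm
end

section
/- Let L_k be the lower bidiagonal CG Cholesky factor (diagonal 1/√γ_{j−1}, subdiagonal √(δ_j/γ_{j−1})) and let y solve L_kᵀ L_k y = ‖r₀‖ e₁. Then y_j = (−1)^{j+1} (1/‖r_{j−1}‖) ∑_{i=j−1}^{k−1} ψ_i for j = 1,…,k, where ψ_i = γ_i ‖r_i‖² and ‖r_j‖² = ‖r₀‖² ∏_{i=1}^{j} δ_i. Consequently ξ_k := ‖r₀‖² e₁ᵀ T_k^{−2} e₁ = ∑_{j=0}^{k−1} ‖r_j‖^{−2} (∑_{i=j}^{k−1} ψ_i)². -/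
/-!
Write `w_i = (-1)^i √γ_i ‖r_i‖`. Since `‖r_{i+1}‖² = ‖r_i‖² δ_{i+1}`, the subdiagonal entry
`√(δ_{i+1}/γ_i)` of `L_k` equals `‖r_{i+1}‖ / (‖r_i‖ √γ_i)`; in this form `L_k w = ‖r₀‖ e₁` is a
telescoping identity, and `L_kᵀ y = w` for the claimed `y` holds because consecutive tail sums
`∑_{i ≥ j} ψ_i` differ by `ψ_j`. As `T_k` is symmetric and invertible,
`ξ_k = ‖r₀‖² ‖T_k⁻¹ e₁‖² = ‖y‖²`.
-/

open Matrix

def Matrix.IsLowerBidiagonal {n : ℕ} {α : Type*} [Zero α] (L : Matrix (Fin n) (Fin n) α) : Prop :=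
  ∀ i j : Fin n, (i : ℕ) ≠ j → (i : ℕ) ≠ j + 1 → L i j = 0

namespace Matrix.IsLowerBidiagonal

variable {n : ℕ} {α : Type*} [NonUnitalNonAssocSemiring α] {L : Matrix (Fin n) (Fin n) α}

theorem mulVec_apply_of_val_eq_succ (hL : L.IsLowerBidiagonal) {i j : Fin n}
    (hij : (i : ℕ) = j + 1) (v : Fin n → α) : (L *ᵥ v) i = L i j * v j + L i i * v i :=
  Fintype.sum_eq_add j i (fun h => by simp [h] at hij) fun x hx =>
    mul_eq_zero_of_left
      (hL i x (fun h => hx.2 (Fin.ext h.symm)) fun h => hx.1 (Fin.ext (by omega))) _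

theorem mulVec_apply_of_val_eq_zero (hL : L.IsLowerBidiagonal) {i : Fin n}
    (hi : (i : ℕ) = 0) (v : Fin n → α) : (L *ᵥ v) i = L i i * v i :=
  Fintype.sum_eq_single i fun x hx =>
    mul_eq_zero_of_left (hL i x (fun h => hx (Fin.ext h.symm)) (by omega)) _

theorem transpose_mulVec_apply_of_val_eq_succ (hL : L.IsLowerBidiagonal) {i j : Fin n}
    (hij : (i : ℕ) = j + 1) (v : Fin n → α) : (Lᵀ *ᵥ v) j = L j j * v j + L i j * v i :=
  Fintype.sum_eq_add j i (fun h => by simp [h] at hij) fun x hx =>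
    mul_eq_zero_of_left
      (hL x j (fun h => hx.1 (Fin.ext h)) fun h => hx.2 (Fin.ext (by omega))) _

theorem transpose_mulVec_apply_of_val_succ_eq (hL : L.IsLowerBidiagonal) {j : Fin n}
    (hj : (j : ℕ) + 1 = n) (v : Fin n → α) : (Lᵀ *ᵥ v) j = L j j * v j :=
  Fintype.sum_eq_single j fun x hx =>
    mul_eq_zero_of_left (hL x j (fun h => hx (Fin.ext h)) (by omega)) _

theorem isLowerTriangular (hL : L.IsLowerBidiagonal) : L.IsLowerTriangular := fun i j hij =>
  hL i j (Fin.val_ne_of_ne (ne_of_lt hij)) <| by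
    simp only [OrderDual.toDual_lt_toDual, Fin.lt_def] at hij
    omega

end Matrix.IsLowerBidiagonal

theorem Matrix.sq_mul_dotProduct_inv_mul_inv_mulVec {n : Type*} [Fintype n] [DecidableEq n]
    {α : Type*} [CommRing α] {M : Matrix n n α} (hM : M.IsSymm) (hdet : IsUnit M.det) {c : α}
    {e y : n → α} (hy : M *ᵥ y = c • e) : c ^ 2 * (e ⬝ᵥ (M⁻¹ * M⁻¹) *ᵥ e) = y ⬝ᵥ y := by
  have hy' : y = c • M⁻¹ *ᵥ e := by
    rw [← mulVec_smul, ← hy, mulVec_mulVec, nonsing_inv_mul _ hdet, one_mulVec]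
  have hsymm : e ⬝ᵥ (M⁻¹ * M⁻¹) *ᵥ e = M⁻¹ *ᵥ e ⬝ᵥ M⁻¹ *ᵥ e := by
    rw [← mulVec_mulVec, dotProduct_mulVec, ← mulVec_transpose, transpose_nonsing_inv, hM.eq]
  rw [hsymm, hy', smul_dotProduct, dotProduct_smul, smul_eq_mul, smul_eq_mul]
  ring

section CGFactor

variable {k : ℕ} {γ R : ℕ → ℝ} {L : Matrix (Fin (k + 1)) (Fin (k + 1)) ℝ}

theorem cgFactor_transpose_mulVec (hγ : ∀ j, 0 < γ j) (hR : ∀ j, 0 < R j)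
    (hL : L.IsLowerBidiagonal) (hdiag : ∀ i, L i i = 1 / √(γ i))
    (hsub : ∀ i j : Fin (k + 1), (i : ℕ) = j + 1 → L i j = √(R i) / (√(R j) * √(γ j))) :
    Lᵀ *ᵥ (fun j : Fin (k + 1) =>
      (-1) ^ (j : ℕ) * (√(R j))⁻¹ * ∑ i ∈ Finset.Ico (j : ℕ) (k + 1), γ i * R i) =
      fun j : Fin (k + 1) => (-1) ^ (j : ℕ) * √(γ j) * √(R j) := by
  funext j
  have hg : 0 < √(γ j) := Real.sqrt_pos.mpr (hγ j)
  have hr : 0 < √(R j) := Real.sqrt_pos.mpr (hR j)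
  have hγR : γ j * R j = (√(γ j) * √(R j)) ^ 2 := by
    rw [mul_pow, Real.sq_sqrt (hγ j).le, Real.sq_sqrt (hR j).le]
  rcases (Nat.lt_succ_iff.mp j.isLt).lt_or_eq with hjk | hjk
  · set i : Fin (k + 1) := ⟨j + 1, by omega⟩
    have hr' : 0 < √(R (j + 1)) := Real.sqrt_pos.mpr (hR _)
    rw [hL.transpose_mulVec_apply_of_val_eq_succ (i := i) rfl, hdiag, hsub i j rfl,
      Finset.sum_eq_sum_Ico_succ_bot (by omega), hγR]
    simp only [i, pow_succ]
    field_simp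
    ring
  · rw [hL.transpose_mulVec_apply_of_val_succ_eq (by omega), hdiag, hjk, Nat.Ico_succ_singleton,
      Finset.sum_singleton, ← hjk, hγR]
    field_simp

theorem cgFactor_mulVec (hγ : ∀ j, 0 < γ j) (hR : ∀ j, 0 < R j)
    (hL : L.IsLowerBidiagonal) (hdiag : ∀ i, L i i = 1 / √(γ i))
    (hsub : ∀ i j : Fin (k + 1), (i : ℕ) = j + 1 → L i j = √(R i) / (√(R j) * √(γ j))) :
    L *ᵥ (fun j : Fin (k + 1) => (-1) ^ (j : ℕ) * √(γ j) * √(R j)) =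
      √(R 0) • Pi.single 0 1 := by
  funext i
  rcases i with ⟨_ | m, hm⟩
  · have hg : 0 < √(γ 0) := Real.sqrt_pos.mpr (hγ 0)
    rw [hL.mulVec_apply_of_val_eq_zero rfl, hdiag]
    field_simp
    simp
  · set j : Fin (k + 1) := ⟨m, by omega⟩
    have hg : 0 < √(γ (m + 1)) := Real.sqrt_pos.mpr (hγ _)
    have hgj : 0 < √(γ m) := Real.sqrt_pos.mpr (hγ m)
    have hr : 0 < √(R m) := Real.sqrt_pos.mpr (hR m)
    rw [hL.mulVec_apply_of_val_eq_succ (j := j) rfl, hdiag, hsub _ j rfl, Pi.smul_apply,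
      Pi.single_eq_of_ne (by simp [Fin.ext_iff]), smul_zero]
    simp only [j, pow_succ]
    field_simp
    ring

theorem cgFactor_mul_transpose_mulVec (hγ : ∀ j, 0 < γ j) (hR : ∀ j, 0 < R j)
    (hL : L.IsLowerBidiagonal) (hdiag : ∀ i, L i i = 1 / √(γ i))
    (hsub : ∀ i j : Fin (k + 1), (i : ℕ) = j + 1 → L i j = √(R i) / (√(R j) * √(γ j))) :
    (L * Lᵀ) *ᵥ (fun j : Fin (k + 1) =>
      (-1) ^ (j : ℕ) * (√(R j))⁻¹ * ∑ i ∈ Finset.Ico (j : ℕ) (k + 1), γ i * R i) =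
      √(R 0) • Pi.single 0 1 := by
  rw [← mulVec_mulVec, cgFactor_transpose_mulVec hγ hR hL hdiag hsub,
    cgFactor_mulVec hγ hR hL hdiag hsub]

end CGFactor

theorem Real.sqrt_div_eq_sqrt_mul_div {a b c : ℝ} (ha : 0 < a) (hc : 0 ≤ c) :
    √(b / c) = √(a * b) / (√a * √c) := by
  have hsa : 0 < √a := Real.sqrt_pos.mpr ha
  rw [Real.sqrt_div' _ hc, Real.sqrt_mul ha.le]
  field_simp

theorem neg_one_pow_mul_inv_sqrt_mul_mul_self {r : ℝ} (hr : 0 ≤ r) (n : ℕ) (s : ℝ) :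
    (-1) ^ n * (√r)⁻¹ * s * ((-1) ^ n * (√r)⁻¹ * s) = r⁻¹ * s ^ 2 := by
  calc _ = ((-1) ^ n * (-1) ^ n) * (√r ^ 2)⁻¹ * s ^ 2 := by ring
    _ = _ := by rw [← mul_pow, neg_one_mul, neg_neg, one_pow, one_mul, Real.sq_sqrt hr]

/-- For the CG Cholesky factor `L` and `y` with `L Lᵀ y = ‖r₀‖ e₁` (i.e.
`y = ‖r₀‖ L⁻ᵀL⁻¹ e₁`), the entries of `y` are
`y_j = (−1)^{j+1} (1/‖r_{j−1}‖) ∑_{i=j−1}^{k−1} ψ_i` with `ψ_i = γ_i ‖r_i‖²`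
and `‖r_j‖² = ‖r₀‖² ∏_{i=1}^{j} δ_i`; consequently
`ξ_k = ‖r₀‖² e₁ᵀ T_k⁻² e₁ = ∑_{j=0}^{k−1} ‖r_j‖⁻² (∑_{i=j}^{k−1} ψ_i)²`. -/
theorem stmt_16 {k : ℕ} (γ δ : ℕ → ℝ)
    (hγ : ∀ j, 0 < γ j) (hδ : ∀ j, 1 ≤ j → 0 < δ j)
    (ρ0 : ℝ) (hρ0 : 0 < ρ0)
    (R : ℕ → ℝ) (hR : ∀ j, R j = ρ0^2 * ∏ i ∈ Finset.Icc 1 j, δ i)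
    (L : Matrix (Fin (k+1)) (Fin (k+1)) ℝ)
    (hdiag : ∀ i : Fin (k+1), L i i = 1 / Real.sqrt (γ i))
    (hsub : ∀ i j : Fin (k+1), (i : ℕ) = (j : ℕ) + 1 →
      L i j = Real.sqrt (δ i / γ j))
    (hzero : ∀ i j : Fin (k+1), (i : ℕ) ≠ (j : ℕ) → (i : ℕ) ≠ (j : ℕ) + 1 →
      L i j = 0)
    (y : Fin (k+1) → ℝ)
    (hy : (L * Lᵀ).mulVec y = ρ0 • (Pi.single (0 : Fin (k+1)) (1 : ℝ) : Fin (k+1) → ℝ)) :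
    (∀ j : Fin (k+1), y j =
      (-1 : ℝ)^(j : ℕ) * (Real.sqrt (R j))⁻¹ *
        ∑ i ∈ Finset.Ico (j : ℕ) (k+1), γ i * R i) ∧
    ρ0^2 * (Pi.single (0 : Fin (k+1)) (1 : ℝ) ⬝ᵥ
        ((L * Lᵀ)⁻¹ * (L * Lᵀ)⁻¹).mulVec (Pi.single (0 : Fin (k+1)) (1 : ℝ))) =
      ∑ j ∈ Finset.range (k+1), (R j)⁻¹ * (∑ i ∈ Finset.Ico j (k+1), γ i * R i)^2 := by
  have hRpos (j : ℕ) : 0 < R j :=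
    hR j ▸ mul_pos (pow_pos hρ0 2) (Finset.prod_pos fun i hi => hδ i (Finset.mem_Icc.mp hi).1)
  have hRsucc (j : ℕ) : R (j + 1) = R j * δ (j + 1) := by
    rw [hR, hR, Finset.prod_Icc_succ_top (by omega)]
    ring
  have hR0 : √(R 0) = ρ0 := by simp [hR, Real.sqrt_sq hρ0.le]
  have hsub' (i j : Fin (k + 1)) (hij : (i : ℕ) = j + 1) :
      L i j = √(R i) / (√(R j) * √(γ j)) := by
    rw [hsub i j hij, hij, hRsucc, Real.sqrt_div_eq_sqrt_mul_div (hRpos j) (hγ j).le]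
  have hL : L.IsLowerBidiagonal := hzero
  have hLdet : IsUnit L.det := by
    rw [det_of_isLowerTriangular L hL.isLowerTriangular]
    exact (Finset.prod_ne_zero_iff.mpr fun i _ => by
      simp [hdiag, (Real.sqrt_pos.mpr (hγ i)).ne']).isUnit
  have hdet : IsUnit (L * Lᵀ).det := by
    rw [det_mul, det_transpose]
    exact hLdet.mul hLdet
  have hz := cgFactor_mul_transpose_mulVec hγ hRpos hL hdiag hsub'
  rw [hR0] at hz
  have hyz := mulVec_injective_iff_isUnit.mpr ((isUnit_iff_isUnit_det _).mpr hdet)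
    (hy.trans hz.symm)
  refine ⟨fun j => by rw [hyz], ?_⟩
  rw [sq_mul_dotProduct_inv_mul_inv_mulVec (isSymm_mul_transpose_self L) hdet hy, hyz, dotProduct,
    ← Fin.sum_univ_eq_sum_range]
  exact Finset.sum_congr rfl fun j _ => neg_one_pow_mul_inv_sqrt_mul_mul_self (hRpos j).le _ _
end

section
/- Rigal–Gaches normwise backward error: Let A ∈ ℝ^{N×N}, b ∈ ℝᴺ, and x̃ ∈ ℝᴺ with x̃ ≠ 0 or b ≠ 0, and r̃ = b − A x̃. Then min{ δ ≥ 0 : ∃ ΔA, Δb with (A + ΔA) x̃ = b + Δb, ‖ΔA‖ ≤ δ‖A‖, ‖Δb‖ ≤ δ‖b‖ } = ‖r̃‖/(‖A‖‖x̃‖ + ‖b‖), provided ‖A‖‖x̃‖ + ‖b‖ > 0 (‖·‖ the spectral norm for matrices, Euclidean norm for vectors). -/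
/-!
Any admissible perturbation satisfies `b - A x = ΔA x - Δb`, so the triangle inequality gives
`‖b - A x‖ ≤ δ (‖A‖ ‖x‖ + ‖b‖)`. Conversely, writing `r = b - A x` and `D = ‖A‖ ‖x‖ + ‖b‖`,
the perturbation splits `r` between the matrix and the right-hand side in the ratio
`‖A‖ ‖x‖ : ‖b‖`: `Δb = -(‖b‖ / D) r`, and `ΔA` is a rank-one map `g(·) (‖A‖ / D) r` built from a
Hahn–Banach functional `g` norming `x`, so that `ΔA x = (‖A‖ ‖x‖ / D) r` and `‖ΔA‖ ≤ ‖A‖ ‖r‖ / D`.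
-/

open ContinuousLinearMap

section BackwardError

variable {𝕜 E F : Type*} [RCLike 𝕜] [NormedAddCommGroup E] [NormedSpace 𝕜 E]
  [NormedAddCommGroup F] [NormedSpace 𝕜 F]

def normwiseBackwardErrors (A : E →L[𝕜] F) (b : F) (x : E) : Set ℝ :=
  {δ : ℝ | 0 ≤ δ ∧ ∃ (ΔA : E →L[𝕜] F) (Δb : F),
    (A + ΔA) x = b + Δb ∧ ‖ΔA‖ ≤ δ * ‖A‖ ∧ ‖Δb‖ ≤ δ * ‖b‖}

theorem exists_opNorm_le_apply_eq_norm_smul (x : E) (y : F) :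
    ∃ T : E →L[𝕜] F, T x = (‖x‖ : 𝕜) • y ∧ ‖T‖ ≤ ‖y‖ := by
  obtain ⟨g, hg_norm, hg_x⟩ := exists_dual_vector'' 𝕜 x
  refine ⟨g.smulRight y, by rw [smulRight_apply, hg_x], ?_⟩
  rw [norm_smulRight_apply]
  exact mul_le_of_le_one_left (norm_nonneg y) hg_norm

variable {A : E →L[𝕜] F} {b : F} {x : E}

theorem norm_sub_apply_le_of_mem_normwiseBackwardErrors {δ : ℝ}
    (hδ : δ ∈ normwiseBackwardErrors A b x) : ‖b - A x‖ ≤ δ * (‖A‖ * ‖x‖ + ‖b‖) := by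
  obtain ⟨-, ΔA, Δb, hsolve, hΔA, hΔb⟩ := hδ
  have hres : b - A x = ΔA x - Δb := by
    rw [add_apply] at hsolve
    rw [sub_eq_sub_iff_add_eq_add, ← hsolve, add_comm]
  calc ‖b - A x‖ = ‖ΔA x - Δb‖ := by rw [hres]
    _ ≤ ‖ΔA‖ * ‖x‖ + ‖Δb‖ := (norm_sub_le _ _).trans (by gcongr; exact ΔA.le_opNorm x)
    _ ≤ δ * ‖A‖ * ‖x‖ + δ * ‖b‖ := by gcongr
    _ = δ * (‖A‖ * ‖x‖ + ‖b‖) := by ring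

theorem div_mem_normwiseBackwardErrors (hD : 0 < ‖A‖ * ‖x‖ + ‖b‖) :
    ‖b - A x‖ / (‖A‖ * ‖x‖ + ‖b‖) ∈ normwiseBackwardErrors A b x := by
  set D := ‖A‖ * ‖x‖ + ‖b‖
  set r := b - A x
  obtain ⟨ΔA, hΔA_x, hΔA_norm⟩ :=
    exists_opNorm_le_apply_eq_norm_smul (𝕜 := 𝕜) x (((‖A‖ / D : ℝ) : 𝕜) • r)
  refine ⟨by positivity, ΔA, -(((‖b‖ / D : ℝ) : 𝕜) • r), ?_, ?_, ?_⟩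
  · have hsplit : ((‖x‖ * (‖A‖ / D) : ℝ) : 𝕜) + ((‖b‖ / D : ℝ) : 𝕜) = 1 := by
      rw [← RCLike.ofReal_add, ← RCLike.ofReal_one]
      congr 1
      field_simp
      ring
    rw [add_apply, hΔA_x, smul_smul, ← RCLike.ofReal_mul]
    linear_combination (norm := module) hsplit • r
  · calc ‖ΔA‖ ≤ ‖((‖A‖ / D : ℝ) : 𝕜) • r‖ := hΔA_norm
      _ = ‖r‖ / D * ‖A‖ := by
        rw [norm_smul, RCLike.norm_ofReal, abs_of_nonneg (by positivity)]
        ring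
  · rw [norm_neg, norm_smul, RCLike.norm_ofReal, abs_of_nonneg (by positivity)]
    exact le_of_eq (by ring)

theorem isLeast_normwiseBackwardErrors (hD : 0 < ‖A‖ * ‖x‖ + ‖b‖) :
    IsLeast (normwiseBackwardErrors A b x) (‖b - A x‖ / (‖A‖ * ‖x‖ + ‖b‖)) :=
  ⟨div_mem_normwiseBackwardErrors hD, fun _ hδ =>
    (div_le_iff₀ hD).2 (norm_sub_apply_le_of_mem_normwiseBackwardErrors hδ)⟩

end BackwardError

/-- Rigal–Gaches: the normwise backward error
`min{δ ≥ 0 : ∃ ΔA Δb, (A + ΔA) x̃ = b + Δb, ‖ΔA‖ ≤ δ‖A‖, ‖Δb‖ ≤ δ‖b‖}`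
equals `‖r̃‖/(‖A‖‖x̃‖ + ‖b‖)` with `r̃ = b − A x̃`, provided
`‖A‖‖x̃‖ + ‖b‖ > 0` (operator 2-norm / Euclidean norm). -/
theorem stmt_19 {N : ℕ}
    (A : EuclideanSpace ℝ (Fin N) →L[ℝ] EuclideanSpace ℝ (Fin N))
    (b xt : EuclideanSpace ℝ (Fin N))
    (rt : EuclideanSpace ℝ (Fin N)) (hrt : rt = b - A xt)
    (hpos : 0 < ‖A‖ * ‖xt‖ + ‖b‖) :
    IsLeast {δ : ℝ | 0 ≤ δ ∧
        ∃ (ΔA : EuclideanSpace ℝ (Fin N) →L[ℝ] EuclideanSpace ℝ (Fin N))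
          (Δb : EuclideanSpace ℝ (Fin N)),
          (A + ΔA) xt = b + Δb ∧ ‖ΔA‖ ≤ δ * ‖A‖ ∧ ‖Δb‖ ≤ δ * ‖b‖}
      (‖rt‖ / (‖A‖ * ‖xt‖ + ‖b‖)) :=
  hrt ▸ isLeast_normwiseBackwardErrors hpos
end
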